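/- arXiv:0809.0110 — 2 statements merged into one kernel-verified Lean document; each statement's English description precedes it below -/
import Mathlib

section
/- Let D be a class of phylogenetic networks on taxa set S on which the μ-distance satisfies the separation axiom (d_μ(N1,N2) = 0 implies N1 ≅ N2 for all N1, N2 ∈ D). Then Nakhleh's measure m also satisfies the separation axiom on D: m(N1,N2) = 0 implies N1 ≅ N2. -/
open scoped Classical

/-- Nested-label encoding type at nesting depth `n`: an atom of `S`, or a
multiset of encodings of smaller depth. -/
def NLT (S : Type) : ℕ → Type :=
  fun n => Nat.rec S (fun _ ih => S ⊕ Multiset ih) n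

/-- A phylogenetic network on a set `S` of taxa: a rooted finite DAG whose
leaves are bijectively labeled by `S`. -/
structure PhyloNetwork (S : Type) [Fintype S] : Type 1 where
  V : Type
  fintypeV : Fintype V
  arc : V → V → Prop
  acyclic : ∀ v, ¬ Relation.TransGen arc v v
  root : V
  rootConn : ∀ v, Relation.ReflTransGen arc root v
  lab : V → S
  labBij : ∀ s : S, ∃! v, (∀ w, ¬ arc v w) ∧ lab v = s

attribute [instance] PhyloNetwork.fintypeV

variable {S : Type} [Fintype S]

def PhyloNetwork.IsLeaf (N : PhyloNetwork S) (v : N.V) : Prop := ∀ w, ¬ N.arc v w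

noncomputable def PhyloNetwork.children (N : PhyloNetwork S) (v : N.V) : Multiset N.V :=
  (Finset.univ.filter (fun w => N.arc v w)).val

/-- The nested label of a node, encoded at depth `n` (meaningful as soon as
`n` exceeds the height of the node). -/
noncomputable def nlAux (N : PhyloNetwork S) : (n : ℕ) → N.V → NLT S n
  | 0 => fun v => N.lab v
  | n+1 => fun v =>
      if N.IsLeaf v then Sum.inl (N.lab v)
      else Sum.inr ((N.children v).map (nlAux N n))

/-- A sufficient encoding depth for comparing nodes of the two networks. -/
def fuel (N1 N2 : PhyloNetwork S) : ℕ := Fintype.card N1.V + Fintype.card N2.V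

/-- `ℓ(u) = ℓ(v)`: the nested labels of `u` and `v` coincide. -/
def sameNL (N1 N2 : PhyloNetwork S) (u : N1.V) (v : N2.V) : Prop :=
  ∀ n, fuel N1 N2 ≤ n → nlAux N1 n u = nlAux N2 n v

/-- Symmetric difference of multisets. -/
noncomputable def msd {X : Type*} (M1 M2 : Multiset X) : Multiset X :=
  (M1 - M2) + (M2 - M1)

/-- The nested labels representation `Υ(N)` (at encoding depth `n`). -/
noncomputable def upsilon (N : PhyloNetwork S) (n : ℕ) : Multiset (NLT S n) :=
  Finset.univ.val.map (nlAux N n)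

/-- Nakhleh's dissimilarity measure `m`. -/
noncomputable def mdist (N1 N2 : PhyloNetwork S) : ℝ :=
  (Multiset.card (msd (upsilon N1 (fuel N1 N2)) (upsilon N2 (fuel N1 N2))) : ℝ) / 2

/-- `m_i(v)`: number of directed paths from `v` to the leaf labeled `i`. -/
noncomputable def PhyloNetwork.mu (N : PhyloNetwork S) (v : N.V) (i : S) : ℕ :=
  Set.ncard {l : List N.V | l.Chain' N.arc ∧ l.head? = some v ∧
    ∃ w, l.getLast? = some w ∧ N.IsLeaf w ∧ N.lab w = i}

/-- The μ-representation of `N`: the multiset of μ-vectors of its nodes. -/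
noncomputable def muRep (N : PhyloNetwork S) : Multiset (S → ℕ) :=
  Finset.univ.val.map (fun v => N.mu v)

/-- The μ-distance. -/
noncomputable def dmu (N1 N2 : PhyloNetwork S) : ℝ :=
  (Multiset.card (msd (muRep N1) (muRep N2)) : ℝ) / 2

/-- Number of directed paths between two nodes. -/
noncomputable def numPaths (N : PhyloNetwork S) (u w : N.V) : ℕ :=
  Set.ncard {l : List N.V | l.Chain' N.arc ∧ l.head? = some u ∧ l.getLast? = some w}

/-- Leaf-label preserving isomorphism of phylogenetic networks. -/
def PhyloIso (N1 N2 : PhyloNetwork S) : Prop :=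
  ∃ e : N1.V ≃ N2.V, (∀ u v, N1.arc u v ↔ N2.arc (e u) (e v)) ∧
    ∀ v, N1.IsLeaf v → N2.lab (e v) = N1.lab v

/-- Height of a node: the largest length of a directed path from it to a leaf. -/
noncomputable def PhyloNetwork.height (N : PhyloNetwork S) (v : N.V) : ℕ :=
  sSup {k | ∃ l : List N.V, l.Chain' N.arc ∧ l.head? = some v ∧
    (∃ w, l.getLast? = some w ∧ N.IsLeaf w) ∧ l.length = k + 1}


section Aux

variable {S : Type} [Fintype S]

/-- Any chain in an acyclic digraph has no duplicates. -/
lemma chain'_nodup (N : PhyloNetwork S) {l : List N.V} (hl : l.Chain' N.arc) :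
    l.Nodup := by
  have h1 : l.Chain' (Relation.TransGen N.arc) :=
    List.IsChain.imp (fun a b h => Relation.TransGen.single h) hl
  have : IsTrans N.V (Relation.TransGen N.arc) :=
    ⟨fun a b c h1 h2 => h1.trans h2⟩
  have h2 : l.Pairwise (Relation.TransGen N.arc) := List.isChain_iff_pairwise.mp h1
  exact h2.imp (fun {a b} h => by
    rintro rfl
    exact N.acyclic a h)

lemma chain'_length_le (N : PhyloNetwork S) {l : List N.V} (hl : l.Chain' N.arc) :
    l.length ≤ Fintype.card N.V :=
  (chain'_nodup N hl).length_le_card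

lemma paths_finite (N : PhyloNetwork S) (Q : List N.V → Prop) :
    {l : List N.V | l.Chain' N.arc ∧ Q l}.Finite := by
  have : {l : List N.V | l.Chain' N.arc ∧ Q l} ⊆
      {l : List N.V | l.length ≤ Fintype.card N.V} :=
    fun l hl => chain'_length_le N hl.1
  exact Set.Finite.subset (List.finite_length_le N.V (Fintype.card N.V)) this

/-- Longest chain starting at `v`. -/
noncomputable def rank (N : PhyloNetwork S) (v : N.V) : ℕ :=
  sSup {k | ∃ l : List N.V, l.Chain' N.arc ∧ l.head? = some v ∧ l.length = k + 1}

lemma rank_bddAbove (N : PhyloNetwork S) (v : N.V) :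
    ∀ k ∈ {k | ∃ l : List N.V, l.Chain' N.arc ∧ l.head? = some v ∧ l.length = k + 1},
      k + 1 ≤ Fintype.card N.V := by
  rintro k ⟨l, hc, _, hlen⟩
  rw [← hlen]; exact chain'_length_le N hc

lemma rank_lt_card (N : PhyloNetwork S) (v : N.V) :
    rank N v < Fintype.card N.V := by
  have hpos : 0 < Fintype.card N.V := Fintype.card_pos_iff.mpr ⟨N.root⟩
  have := rank_bddAbove N v
  have : rank N v ≤ Fintype.card N.V - 1 :=
    csSup_le' (fun k hk => by have := rank_bddAbove N v k hk; omega)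
  omega

lemma rank_child_lt (N : PhyloNetwork S) {v c : N.V} (h : N.arc v c) :
    rank N c < rank N v := by
  have hbdd : BddAbove {k | ∃ l : List N.V, l.Chain' N.arc ∧ l.head? = some v ∧
      l.length = k + 1} :=
    ⟨Fintype.card N.V, fun k hk => by have := rank_bddAbove N v k hk; omega⟩
  have hstep : ∀ k ∈ {k | ∃ l : List N.V, l.Chain' N.arc ∧ l.head? = some c ∧
      l.length = k + 1}, k + 1 ≤ rank N v := by
    rintro k ⟨l, hc, hh, hlen⟩
    refine le_csSup hbdd ⟨v :: l, ?_, rfl, by simp [hlen]⟩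
    cases l with
    | nil => simp at hh
    | cons a t =>
      simp only [List.head?] at hh
      cases hh
      exact List.isChain_cons_cons.mpr ⟨h, hc⟩
  have h1 : 1 ≤ rank N v := hstep 0 ⟨[c], List.isChain_singleton c, rfl, rfl⟩
  have h2 : rank N c ≤ rank N v - 1 :=
    csSup_le' (fun k hk => by have := hstep k hk; omega)
  omega

/-- Decode a nested label into a μ-vector. -/
noncomputable def nlMu : (n : ℕ) → NLT S n → S → ℕ
  | 0 => fun s i => if s = i then 1 else 0
  | n+1 => fun x i =>
      Sum.elim (fun s => if s = i then 1 else 0)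
        (fun M : Multiset (NLT S n) => (M.map (fun y => nlMu n y i)).sum) x

lemma mu_leaf (N : PhyloNetwork S) {w : N.V} (hw : N.IsLeaf w) (i : S) :
    N.mu w i = if N.lab w = i then 1 else 0 := by
  have key : ∀ l : List N.V, (l.Chain' N.arc ∧ l.head? = some w ∧
      ∃ w', l.getLast? = some w' ∧ N.IsLeaf w' ∧ N.lab w' = i) ↔
      (l = [w] ∧ N.lab w = i) := by
    intro l
    constructor
    · rintro ⟨hc, hh, w', hlast, hlw', hlab'⟩
      cases l with
      | nil => simp at hh
      | cons a t =>
        obtain rfl : w = a := by simpa using hh.symm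
        cases t with
        | nil =>
          obtain rfl : w = w' := by simpa using hlast
          exact ⟨rfl, hlab'⟩
        | cons b t' => exact absurd (List.isChain_cons_cons.mp hc).1 (hw b)
    · rintro ⟨rfl, hlab⟩
      exact ⟨List.isChain_singleton w, rfl, w, rfl, hw, hlab⟩
  rw [PhyloNetwork.mu]
  by_cases hlab : N.lab w = i
  · have hset : {l : List N.V | l.Chain' N.arc ∧ l.head? = some w ∧
        ∃ w', l.getLast? = some w' ∧ N.IsLeaf w' ∧ N.lab w' = i} = {[w]} := by
      ext l
      simp only [Set.mem_setOf_eq, Set.mem_singleton_iff, key l, hlab, and_true]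
    rw [hset, if_pos hlab, Set.ncard_singleton]
  · have hset : {l : List N.V | l.Chain' N.arc ∧ l.head? = some w ∧
        ∃ w', l.getLast? = some w' ∧ N.IsLeaf w' ∧ N.lab w' = i} = ∅ := by
      ext l
      simp only [Set.mem_setOf_eq, Set.mem_empty_iff_false, iff_false, key l, hlab,
        and_false, not_false_iff]
    rw [hset, if_neg hlab, Set.ncard_empty]

lemma mu_nonleaf (N : PhyloNetwork S) {v : N.V} (hv : ¬ N.IsLeaf v) (i : S) :
    N.mu v i = ∑ c ∈ Finset.univ.filter (fun c => N.arc v c), N.mu c i := by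
  classical
  set P : N.V → Set (List N.V) := fun u => {l | l.Chain' N.arc ∧ l.head? = some u ∧
    ∃ w, l.getLast? = some w ∧ N.IsLeaf w ∧ N.lab w = i} with hP
  have hfin : ∀ u, (P u).Finite := fun u => paths_finite N _
  set C := Finset.univ.filter (fun c => N.arc v c) with hC
  have hmem : ∀ l, l ∈ P v ↔ ∃ c ∈ C, ∃ t ∈ P c, l = v :: t := by
    intro l
    constructor
    · rintro ⟨hc, hh, w, hlast, hlw, hlab⟩
      cases l with
      | nil => simp at hh
      | cons a t =>
        obtain rfl : v = a := by simpa using hh.symm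
        cases t with
        | nil =>
          obtain rfl : v = w := by simpa using hlast
          exact absurd hlw hv
        | cons b t' =>
          refine ⟨b, by simp [hC, (List.isChain_cons_cons.mp hc).1], (b :: t'), ?_, rfl⟩
          exact ⟨(List.isChain_cons_cons.mp hc).2, rfl, w, by simpa using hlast, hlw, hlab⟩
    · rintro ⟨c, hcC, t, ⟨hct, hth, w, htlast, hlw, hlab⟩, rfl⟩
      have harc : N.arc v c := by simpa [hC] using hcC
      cases t with
      | nil => simp at hth
      | cons a t' =>
        obtain rfl : a = c := by simpa using hth
        exact ⟨List.isChain_cons_cons.mpr ⟨harc, hct⟩, rfl, w, by simpa using htlast, hlw, hlab⟩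
  have hmu : ∀ u, N.mu u i = ((hfin u).toFinset).card := by
    intro u
    rw [PhyloNetwork.mu, Set.ncard_eq_toFinset_card _ (hfin u)]
  rw [hmu v]
  have hFeq : (hfin v).toFinset =
      C.biUnion (fun c => ((hfin c).toFinset).image (fun t => v :: t)) := by
    ext l
    simp only [Set.Finite.mem_toFinset, Finset.mem_biUnion, Finset.mem_image]
    rw [hmem l]
    constructor
    · rintro ⟨c, hcC, t, ht, rfl⟩
      exact ⟨c, hcC, t, by simpa using ht, rfl⟩
    · rintro ⟨c, hcC, t, ht, rfl⟩
      exact ⟨c, hcC, t, by simpa using ht, rfl⟩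
  rw [hFeq, Finset.card_biUnion]
  · refine Finset.sum_congr rfl (fun c _ => ?_)
    rw [Finset.card_image_of_injective _ (fun a b hab => by simpa using hab), hmu c]
  · intro c _ c' _ hne
    rw [Function.onFun, Finset.disjoint_left]
    rintro l hl hl'
    simp only [Finset.mem_image, Set.Finite.mem_toFinset] at hl hl'
    obtain ⟨t, ht, rfl⟩ := hl
    obtain ⟨t', ht', heq⟩ := hl'
    obtain rfl : t' = t := by simpa using heq
    exact hne (Option.some_injective _ (ht.2.1.symm.trans ht'.2.1))

lemma mu_eq_nlMu (N : PhyloNetwork S) :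
    ∀ n, ∀ v : N.V, rank N v < n → ∀ i, N.mu v i = nlMu n (nlAux N n v) i := by
  intro n
  induction n with
  | zero => intro v hv; omega
  | succ n ih =>
    intro v hv i
    by_cases hleaf : N.IsLeaf v
    · rw [mu_leaf N hleaf i]
      simp only [nlAux, hleaf, if_pos, ↓reduceIte, nlMu, Sum.elim_inl]
      rfl
    · rw [mu_nonleaf N hleaf i]
      simp only [nlAux, hleaf, if_neg, not_false_iff, nlMu, Sum.elim_inr,
        Multiset.map_map, Function.comp]
      rw [Finset.sum]
      congr 1
      rw [PhyloNetwork.children]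
      refine (Multiset.map_congr rfl ?_).trans (Multiset.map_map _ _ _).symm
      intro c hc
      have harc : N.arc v c := by
        simpa using (Finset.mem_filter.mp (by exact hc)).2
      exact ih c (by have := rank_child_lt N harc; omega) i

lemma muRep_eq_upsilon (N : PhyloNetwork S) (n : ℕ)
    (hn : Fintype.card N.V ≤ n) :
    muRep N = (upsilon N n).map (fun x => nlMu n x) := by
  rw [muRep, upsilon, Multiset.map_map]
  apply Multiset.map_congr rfl
  intro v _
  funext i
  exact mu_eq_nlMu N n v (lt_of_lt_of_le (rank_lt_card N v) hn) i

end Aux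

/-- If the μ-distance satisfies the separation axiom on a class `D` of
phylogenetic networks on `S`, then Nakhleh's measure `m` also satisfies it
on `D`. -/
theorem m_separates_of_dmu_separates (D : Set (PhyloNetwork S))
    (h : ∀ N1 ∈ D, ∀ N2 ∈ D, dmu N1 N2 = 0 → PhyloIso N1 N2) :
    ∀ N1 ∈ D, ∀ N2 ∈ D, mdist N1 N2 = 0 → PhyloIso N1 N2 := by
  intro N1 hN1 N2 hN2 hm
  apply h N1 hN1 N2 hN2
  have hcard : Multiset.card (msd (upsilon N1 (fuel N1 N2)) (upsilon N2 (fuel N1 N2))) = 0 := by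
    rw [mdist] at hm
    rcases div_eq_zero_iff.mp hm with h0 | h0
    · exact_mod_cast h0
    · norm_num at h0
  have hups : upsilon N1 (fuel N1 N2) = upsilon N2 (fuel N1 N2) := by
    have hmsd := Multiset.card_eq_zero.mp hcard
    rw [msd] at hmsd
    obtain ⟨hA, hB⟩ := add_eq_zero.mp hmsd
    exact le_antisymm (tsub_eq_zero_iff_le.mp hA) (tsub_eq_zero_iff_le.mp hB)
  have hrep : muRep N1 = muRep N2 := by
    rw [muRep_eq_upsilon N1 (fuel N1 N2) (Nat.le_add_right _ _),
      muRep_eq_upsilon N2 (fuel N1 N2) (Nat.le_add_left _ _), hups]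
  rw [dmu, hrep, msd]
  simp
end

section
/- In any phylogenetic network N on taxa set S, if two nodes u and v satisfy ℓ(u) = ℓ(v), then they have the same cluster: C_L(u) = C_L(v), i.e., the sets of leaf labels reachable from u and from v coincide. -/
open scoped Classical

variable {S : Type} [Fintype S]

/-- The cluster of a node: the set of labels of its leaf descendants. -/
def PhyloNetwork.cluster (N : PhyloNetwork S) (v : N.V) : Set S :=
  {s | ∃ w, Relation.ReflTransGen N.arc v w ∧ N.IsLeaf w ∧ N.lab w = s}

/-- Reachability within `n` arc steps. -/
def reachLe (N : PhyloNetwork S) : ℕ → N.V → N.V → Prop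
  | 0 => fun u w => u = w
  | n+1 => fun u w => u = w ∨ ∃ c, N.arc u c ∧ reachLe N n c w

lemma reachLe_refl (N : PhyloNetwork S) : ∀ n (u : N.V), reachLe N n u u
  | 0, _ => rfl
  | _+1, _ => Or.inl rfl

lemma reachLe_succ (N : PhyloNetwork S) :
    ∀ n (u w : N.V), reachLe N n u w → reachLe N (n+1) u w := by
  intro n
  induction n with
  | zero => intro u w hr; cases hr; exact Or.inl rfl
  | succ n ih =>
    intro u w hr
    rcases hr with rfl | ⟨c, hc, hr⟩
    · exact Or.inl rfl
    · exact Or.inr ⟨c, hc, ih c w hr⟩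

lemma reachLe_mono (N : PhyloNetwork S) {m n : ℕ} (hmn : m ≤ n)
    {u w : N.V} (hr : reachLe N m u w) : reachLe N n u w := by
  induction n, hmn using Nat.le_induction with
  | base => exact hr
  | succ n _ ih => exact reachLe_succ N n u w ih

lemma exists_reachLe (N : PhyloNetwork S) {u w : N.V}
    (h : Relation.ReflTransGen N.arc u w) : ∃ n, reachLe N n u w := by
  induction h using Relation.ReflTransGen.head_induction_on with
  | refl => exact ⟨0, rfl⟩
  | head hac _ ih =>
    obtain ⟨n, hn⟩ := ih
    refine ⟨n + 1, ?_⟩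
    exact Or.inr ⟨_, hac, hn⟩

lemma mem_children {N : PhyloNetwork S} {u c : N.V} :
    c ∈ N.children u ↔ N.arc u c := by
  simp [PhyloNetwork.children]

lemma leaf_case {N : PhyloNetwork S} {u v : N.V} {n : ℕ}
    (hnl : nlAux N (n+1) u = nlAux N (n+1) v) (hleaf : N.IsLeaf u) :
    N.lab u ∈ N.cluster v := by
  simp only [nlAux] at hnl
  erw [if_pos hleaf] at hnl
  by_cases hv : N.IsLeaf v
  · erw [if_pos hv] at hnl
    exact ⟨v, Relation.ReflTransGen.refl, hv, (Sum.inl.inj hnl).symm⟩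
  · erw [if_neg hv] at hnl
    exact absurd hnl (by simp)

lemma key_lemma (N : PhyloNetwork S) : ∀ n (u v : N.V),
    nlAux N (n+1) u = nlAux N (n+1) v →
    ∀ s, (∃ w, reachLe N n u w ∧ N.IsLeaf w ∧ N.lab w = s) → s ∈ N.cluster v := by
  intro n
  induction n with
  | zero =>
    rintro u v hnl s ⟨w, hr, hleaf, hlab⟩
    cases hr
    exact hlab ▸ leaf_case hnl hleaf
  | succ n ih =>
    rintro u v hnl s ⟨w, hr, hleaf, hlab⟩
    rcases hr with rfl | ⟨c, hc, hr⟩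
    · exact hlab ▸ leaf_case hnl hleaf
    · have hu : ¬ N.IsLeaf u := fun hl => hl c hc
      simp only [nlAux] at hnl
      erw [if_neg hu] at hnl
      by_cases hv : N.IsLeaf v
      · erw [if_pos hv] at hnl
        exact absurd hnl (by simp)
      erw [if_neg hv] at hnl
      have hmaps := Sum.inr.inj hnl
      have hmem : nlAux N (n+1) c ∈ (N.children v).map (nlAux N (n+1)) := by
        simp only [nlAux]
        erw [← hmaps]
        exact Multiset.mem_map_of_mem _ (mem_children.2 hc)
      obtain ⟨c', hc'mem, heq⟩ := Multiset.mem_map.1 hmem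
      obtain ⟨w', hw', hleaf', hlab'⟩ :=
        ih c c' heq.symm s ⟨w, hr, hleaf, hlab⟩
      exact ⟨w', Relation.ReflTransGen.head (mem_children.1 hc'mem) hw', hleaf', hlab'⟩

/-- If two nodes of a phylogenetic network have the same nested label,
`ℓ(u) = ℓ(v)`, then they have the same cluster: `C_L(u) = C_L(v)`. -/

theorem sameNL_imp_same_cluster (N : PhyloNetwork S) (u v : N.V)
    (h : sameNL N N u v) : N.cluster u = N.cluster v := by
  ext s
  constructor
  · rintro ⟨w, hpath, hleaf, hlab⟩
    obtain ⟨m, hm⟩ := exists_reachLe N hpath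
    have hnl := h (fuel N N + m + 1) (by omega)
    exact key_lemma N (fuel N N + m) u v hnl s
      ⟨w, reachLe_mono N (by omega : m ≤ fuel N N + m) hm, hleaf, hlab⟩
  · rintro ⟨w, hpath, hleaf, hlab⟩
    obtain ⟨m, hm⟩ := exists_reachLe N hpath
    have hnl := (h (fuel N N + m + 1) (by omega)).symm
    exact key_lemma N (fuel N N + m) v u hnl s
      ⟨w, reachLe_mono N (by omega : m ≤ fuel N N + m) hm, hleaf, hlab⟩
end
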